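/- Let G = (V,E) be a finite digraph that is a disjoint union of directed cycles, let ℓ be the length of a shortest cycle in G, and suppose p is a prime dividing ℓ. Then G has no cyclic polymorphism of arity p. Consequently, if a finite disjoint union of directed cycles has cyclic polymorphisms of every prime arity, it contains a loop (a cycle of length 1). -/

import Mathlib

/-!
If `f` is a cyclic polymorphism of arity `p` of the digraph `u → σ u` and `a` lies on a cycle of
length `p * k`, then `f` sends the tuple `(a, σᵏ a, σ²ᵏ a, …)` to a point of period dividing `k`:
applying `σᵏ` coordinatewise rotates the tuple, which `f` does not see, while `f` commutes with
`σᵏ` because it preserves edges. So no cycle can be shorter than `k`, forcing `k ≥ ℓ = p * k`.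
-/

open Function

section CyclicPolymorphism

variable {V : Type*} {p : ℕ}

def IsPolymorphism (E : V → V → Prop) (f : (Fin p → V) → V) : Prop :=
  ∀ u v : Fin p → V, (∀ i, E (u i) (v i)) → E (f u) (f v)

def IsCyclicOperation (hp : 0 < p) (f : (Fin p → V) → V) : Prop :=
  ∀ x : Fin p → V, f x = f (fun i => x ⟨(i.val + 1) % p, Nat.mod_lt _ hp⟩)

variable (σ : V → V)

theorem IsPolymorphism.map_iterate {f : (Fin p → V) → V}
    (hf : IsPolymorphism (fun u v => σ u = v) f) (x : Fin p → V) (j : ℕ) :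
    f (fun i => σ^[j] (x i)) = σ^[j] (f x) := by
  induction j with
  | zero => rfl
  | succ j ih =>
    simp only [iterate_succ_apply']
    rw [← ih]
    exact (hf _ _ fun _ => rfl).symm

theorem iterate_mod_mul_apply_of_isPeriodicPt {a : V} {k : ℕ} (ha : IsPeriodicPt σ (p * k) a)
    {i : ℕ} (hi : i < p) :
    σ^[(i + 1) % p * k] a = σ^[k] (σ^[i * k] a) := by
  rw [← iterate_add_apply, show k + i * k = (i + 1) * k by ring]
  rcases Nat.lt_or_ge (i + 1) p with hi' | hi'
  · rw [Nat.mod_eq_of_lt hi']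
  · obtain rfl : i + 1 = p := le_antisymm hi hi'
    rw [Nat.mod_self, zero_mul, iterate_zero_apply, ha.eq]

theorem exists_isPeriodicPt_of_isCyclicOperation (hp : 0 < p) {f : (Fin p → V) → V}
    (hpoly : IsPolymorphism (fun u v => σ u = v) f) (hcyc : IsCyclicOperation hp f)
    {a : V} {k : ℕ} (ha : IsPeriodicPt σ (p * k) a) :
    ∃ b, IsPeriodicPt σ k b :=
  ⟨f (fun i => σ^[i.val * k] a), by
    calc σ^[k] (f (fun i => σ^[i.val * k] a))
        = f (fun i => σ^[k] (σ^[i.val * k] a)) := (hpoly.map_iterate σ _ k).symm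
      _ = f (fun i => σ^[(i.val + 1) % p * k] a) := by
        simp only [iterate_mod_mul_apply_of_isPeriodicPt σ ha, Fin.is_lt]
      _ = f (fun i => σ^[i.val * k] a) := (hcyc fun i => σ^[i.val * k] a).symm⟩

end CyclicPolymorphism

theorem stmt_11_general {V : Type*} (σ : Equiv.Perm V)
    (E : V → V → Prop) (hE : ∀ u v, E u v ↔ σ u = v)
    (ℓ : ℕ) (hℓ : 1 ≤ ℓ) (hex : ∃ a, (⇑σ)^[ℓ] a = a)
    (hmin : ∀ m, 1 ≤ m → (∃ a, (⇑σ)^[m] a = a) → ℓ ≤ m) :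
    (∀ p : ℕ, ∀ hp : p.Prime, p ∣ ℓ →
      ¬ ∃ f : (Fin p → V) → V,
        (∀ u v : Fin p → V, (∀ i, E (u i) (v i)) → E (f u) (f v)) ∧
        (∀ x : Fin p → V,
          f x = f (fun i => x ⟨(i.val + 1) % p, Nat.mod_lt _ hp.pos⟩))) ∧
    ((∀ q : ℕ, ∀ hq : q.Prime,
        ∃ f : (Fin q → V) → V,
          (∀ u v : Fin q → V, (∀ i, E (u i) (v i)) → E (f u) (f v)) ∧
          (∀ x : Fin q → V,
            f x = f (fun i => x ⟨(i.val + 1) % q, Nat.mod_lt _ hq.pos⟩))) →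
      ℓ = 1 ∧ ∃ a, E a a) := by
  obtain rfl : E = fun u v => σ u = v := by ext u v; exact hE u v
  obtain ⟨a, ha⟩ := hex
  have no_cyclic : ∀ p : ℕ, ∀ hp : p.Prime, p ∣ ℓ →
      ¬ ∃ f : (Fin p → V) → V, IsPolymorphism (fun u v => σ u = v) f ∧
        IsCyclicOperation hp.pos f := by
    rintro p hp ⟨k, rfl⟩ ⟨f, hpoly, hcyc⟩
    obtain ⟨b, hb⟩ := exists_isPeriodicPt_of_isCyclicOperation σ hp.pos hpoly hcyc ha
    have hk : 1 ≤ k := Nat.pos_of_mul_pos_left hℓ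
    nlinarith [hmin k hk ⟨b, hb⟩, hp.two_le]
  refine ⟨no_cyclic, fun hall => ?_⟩
  have hℓ1 : ℓ = 1 := by
    by_contra h
    exact no_cyclic _ (Nat.minFac_prime h) (Nat.minFac_dvd ℓ) (hall _ (Nat.minFac_prime h))
  exact ⟨hℓ1, a, by simpa [hℓ1] using ha⟩

/-- Let `(V, E)` be a finite disjoint union of directed cycles (given by a
permutation `σ` with edges `u → σ u`), and let `ℓ` be the length of a shortest
cycle. If a prime `p` divides `ℓ`, then there is no `p`-ary cyclic polymorphism.
Consequently, if cyclic polymorphisms of every prime arity exist, then `ℓ = 1`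
and the digraph contains a loop. -/
theorem stmt_11 {V : Type*} [Finite V] (σ : Equiv.Perm V)
    (E : V → V → Prop) (hE : ∀ u v, E u v ↔ σ u = v)
    (ℓ : ℕ) (hℓ : 1 ≤ ℓ) (hex : ∃ a, (⇑σ)^[ℓ] a = a)
    (hmin : ∀ m, 1 ≤ m → (∃ a, (⇑σ)^[m] a = a) → ℓ ≤ m) :
    (∀ p : ℕ, ∀ hp : p.Prime, p ∣ ℓ →
      ¬ ∃ f : (Fin p → V) → V,
        (∀ u v : Fin p → V, (∀ i, E (u i) (v i)) → E (f u) (f v)) ∧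
        (∀ x : Fin p → V,
          f x = f (fun i => x ⟨(i.val + 1) % p, Nat.mod_lt _ hp.pos⟩))) ∧
    ((∀ q : ℕ, ∀ hq : q.Prime,
        ∃ f : (Fin q → V) → V,
          (∀ u v : Fin q → V, (∀ i, E (u i) (v i)) → E (f u) (f v)) ∧
          (∀ x : Fin q → V,
            f x = f (fun i => x ⟨(i.val + 1) % q, Nat.mod_lt _ hq.pos⟩))) →
      ℓ = 1 ∧ ∃ a, E a a) :=
  stmt_11_general σ E hE ℓ hℓ hex hmin
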